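/- arXiv:math/0602669 — 2 statements merged into one kernel-verified Lean document; each statement's English description precedes it below -/
import Mathlib

section
/- Let σ, b : ℝ → ℝ be continuous with σ > 0 and b(0) = 0, and suppose that Σ exists. If f ∈ C¹(ℝ) is simultaneously a C¹-generalized solution of Lf = ℓ̇₁ and of Lf = ℓ̇₂ for ℓ̇₁, ℓ̇₂ ∈ C⁰(ℝ), then ℓ̇₁ = ℓ̇₂. In other words, for fixed f ∈ C¹(ℝ) there is at most one ℓ̇ ∈ C⁰(ℝ) such that Lf = ℓ̇ in the C¹-generalized sense. -/
/-!
With the integrating factor `exp Σₙ`, the regularized equation `Lₙ w = d` reads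
`(exp Σₙ · w')' = 2 exp Σₙ · d / σₙ²`. Take `w = fₙ - gₙ` for approximating sequences of the two
solutions, built with one compactly supported nonnegative mollifier. Then `exp Σₙ · w' → 0`,
while the right-hand side converges jointly in `(n, x)`, hence locally uniformly, to
`2 exp Σ · (ℓ₁ - ℓ₂) / σ²`: the mollifier is an approximate identity, so `σₙ² → σ²`. By the
theorem on derivatives of uniform limits, this limit is the derivative of `0`, so `ℓ₁ = ℓ₂`.
-/

open MeasureTheory Filter Topology Set

noncomputable section

/-- A mollifier: a Schwartz function with total integral one. -/
def IsMollifier (Φ : SchwartzMap ℝ ℝ) : Prop := (∫ x : ℝ, Φ x) = 1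

/-- `Φₙ(x) = n Φ(n x)`. -/
def moll (Φ : SchwartzMap ℝ ℝ) (n : ℕ) (x : ℝ) : ℝ := (n : ℝ) * Φ ((n : ℝ) * x)

/-- Convolution `(f ∗ g)(x) = ∫ f(x − y) g(y) dy`. -/
def convol (f g : ℝ → ℝ) (x : ℝ) : ℝ := ∫ y : ℝ, f (x - y) * g y

/-- `σₙ² = (σ² ∧ n) ∗ Φₙ`. -/
def sigmaSqReg (σ : ℝ → ℝ) (Φ : SchwartzMap ℝ ℝ) (n : ℕ) : ℝ → ℝ :=
  convol (fun x => min (σ x ^ 2) (n : ℝ)) (moll Φ n)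

/-- `bₙ = ((−n) ∨ (b ∧ n)) ∗ Φₙ`. -/
def bReg (b : ℝ → ℝ) (Φ : SchwartzMap ℝ ℝ) (n : ℕ) : ℝ → ℝ :=
  convol (fun x => max (-(n : ℝ)) (min (b x) (n : ℝ))) (moll Φ n)

/-- `x ↦ 2∫₀ˣ bₙ'/σₙ² dy`. -/
def SigmaApprox (σ b : ℝ → ℝ) (Φ : SchwartzMap ℝ ℝ) (n : ℕ) (x : ℝ) : ℝ :=
  2 * ∫ y in (0:ℝ)..x, deriv (bReg b Φ n) y / sigmaSqReg σ Φ n y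

/-- `Σ` exists, with value `Sg`: for every mollifier the approximations converge
uniformly on compact sets to the (mollifier-independent) continuous function `Sg`. -/
def SigmaExists (σ b Sg : ℝ → ℝ) : Prop :=
  Continuous Sg ∧
    ∀ Φ : SchwartzMap ℝ ℝ, IsMollifier Φ →
      TendstoLocallyUniformly (fun n => SigmaApprox σ b Φ n) Sg atTop

/-- The regularized operator `Lₙ g = (σₙ²/2) g'' + bₙ' g'`. -/
def Lreg (σ b : ℝ → ℝ) (Φ : SchwartzMap ℝ ℝ) (n : ℕ) (g : ℝ → ℝ) (x : ℝ) : ℝ :=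
  sigmaSqReg σ Φ n x / 2 * deriv (deriv g) x + deriv (bReg b Φ n) x * deriv g x

/-- `f` is a `C¹`-generalized solution of `L f = ℓ`. -/
def IsC1GenSolution (σ b f ℓ : ℝ → ℝ) : Prop :=
  ContDiff ℝ 1 f ∧ Continuous ℓ ∧
    ∀ Φ : SchwartzMap ℝ ℝ, IsMollifier Φ →
      ∃ fn : ℕ → ℝ → ℝ,
        (∀ n, ContDiff ℝ 2 (fn n)) ∧
        (∀ n, Continuous (Lreg σ b Φ n (fn n))) ∧
        TendstoLocallyUniformly fn f atTop ∧
        TendstoLocallyUniformly (fun n => deriv (fn n)) (deriv f) atTop ∧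
        TendstoLocallyUniformly (fun n => Lreg σ b Φ n (fn n)) ℓ atTop

/-- `h(x) = ∫₀ˣ e^{−Σ(y)} dy`, i.e. `h(0) = 0`, `h' = e^{−Σ}`. -/
def hFun (Sg : ℝ → ℝ) (x : ℝ) : ℝ := ∫ y in (0:ℝ)..x, Real.exp (-Sg y)

open Function Metric
open scoped ContDiff Convolution

section LocallyUniform

variable {ι α β : Type*} [TopologicalSpace α] [UniformSpace β] {F : ι → α → β} {f : α → β}
  {p : Filter ι} {x : α}

theorem TendstoLocallyUniformly.tendsto_uncurry (h : TendstoLocallyUniformly F f p)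
    (hf : ContinuousAt f x) : Tendsto (fun q : ι × α => F q.1 q.2) (p ×ˢ 𝓝 x) (𝓝 (f x)) :=
  (hf.tendsto.comp tendsto_snd).congr_uniformity (tendstoLocallyUniformly_iff_filter.1 h x)

theorem tendstoUniformlyOnFilter_nhds_of_tendsto_uncurry
    (h : Tendsto (fun q : ι × α => F q.1 q.2) (p ×ˢ 𝓝 x) (𝓝 (f x))) (hf : ContinuousAt f x) :
    TendstoUniformlyOnFilter F f p (𝓝 x) :=
  ((hf.tendsto.comp tendsto_snd).prodMk_nhds h).mono_right (nhds_le_uniformity (f x))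

end LocallyUniform

theorem exists_nonneg_mollifier_support_subset_ball :
    ∃ Φ : SchwartzMap ℝ ℝ, IsMollifier Φ ∧ (∀ x, 0 ≤ Φ x) ∧ support Φ ⊆ ball 0 1 := by
  let φ : ContDiffBump (0 : ℝ) := ⟨1 / 2, 1, by norm_num, by norm_num⟩
  exact ⟨φ.hasCompactSupport_normed.toSchwartzMap φ.contDiff_normed, φ.integral_normed,
    φ.nonneg_normed, φ.support_normed_eq.subset⟩

section Mollification

variable {Φ : SchwartzMap ℝ ℝ}

theorem moll_nonneg (hΦ : ∀ x, 0 ≤ Φ x) (n : ℕ) (x : ℝ) : 0 ≤ moll Φ n x :=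
  mul_nonneg n.cast_nonneg (hΦ _)

theorem integral_moll (hΦ : IsMollifier Φ) {n : ℕ} (hn : n ≠ 0) : ∫ x, moll Φ n x = 1 := by
  have hn' : (n : ℝ) ≠ 0 := Nat.cast_ne_zero.2 hn
  simp only [moll, integral_const_mul, Measure.integral_comp_mul_left, smul_eq_mul, abs_inv,
    Nat.abs_cast]
  rw [hΦ, mul_one, mul_inv_cancel₀ hn']

theorem support_moll_subset (hΦ : support Φ ⊆ ball 0 1) (n : ℕ) :
    support (moll Φ n) ⊆ ball 0 (n : ℝ)⁻¹ := by
  intro x hx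
  obtain ⟨hn, hΦx⟩ := mul_ne_zero_iff.1 hx
  have hn : (0 : ℝ) < n := lt_of_le_of_ne n.cast_nonneg (Ne.symm hn)
  have h := hΦ hΦx
  rw [mem_ball_zero_iff, Real.norm_eq_abs, abs_mul, Nat.abs_cast] at h
  rw [mem_ball_zero_iff, Real.norm_eq_abs]
  rwa [← lt_div_iff₀' hn, one_div] at h

theorem tendsto_support_moll (hΦ : support Φ ⊆ ball 0 1) :
    Tendsto (fun n => support (moll Φ n)) atTop (𝓝 0).smallSets := by
  refine tendsto_smallSets_iff.2 fun t ht => ?_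
  obtain ⟨ε, hε, hεt⟩ := Metric.mem_nhds_iff.1 ht
  have hinv : Tendsto (fun n : ℕ => (n : ℝ)⁻¹) atTop (𝓝 0) :=
    tendsto_inv_atTop_zero.comp tendsto_natCast_atTop_atTop
  filter_upwards [hinv.eventually (gt_mem_nhds hε)] with n hn
  exact (support_moll_subset hΦ n).trans ((ball_subset_ball hn.le).trans hεt)

theorem hasCompactSupport_moll (hΦ : support Φ ⊆ ball 0 1) (n : ℕ) :
    HasCompactSupport (moll Φ n) :=
  HasCompactSupport.intro (isCompact_closedBall 0 (n : ℝ)⁻¹) fun _ hx =>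
    notMem_support.1 fun h => hx (ball_subset_closedBall (support_moll_subset hΦ n h))

theorem contDiff_moll (n : ℕ) : ContDiff ℝ ∞ (moll Φ n) :=
  contDiff_const.mul ((Φ.smooth ⊤).comp (contDiff_const.mul contDiff_id))

theorem convol_eq_convolution (u φ : ℝ → ℝ) :
    convol u φ = φ ⋆[ContinuousLinearMap.lsmul ℝ ℝ] u := by
  ext x
  simp only [convol, convolution, ContinuousLinearMap.lsmul_apply, smul_eq_mul, mul_comm]

theorem contDiff_convol_moll (hΦ : support Φ ⊆ ball 0 1) {u : ℝ → ℝ} (hu : LocallyIntegrable u)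
    (n : ℕ) : ContDiff ℝ ∞ (convol u (moll Φ n)) := by
  rw [convol_eq_convolution]
  exact (hasCompactSupport_moll hΦ n).contDiff_convolution_left _ (contDiff_moll n) hu

theorem convol_moll_pos (hΦ : IsMollifier Φ) (hΦ₀ : ∀ x, 0 ≤ Φ x) (hΦs : support Φ ⊆ ball 0 1)
    {u : ℝ → ℝ} (hu : Continuous u) (hu₀ : ∀ x, 0 < u x) {n : ℕ} (hn : n ≠ 0) (x : ℝ) :
    0 < convol u (moll Φ n) x := by
  have hcont : Continuous (moll Φ n) := (contDiff_moll n).continuous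
  have hsupp : 0 < volume (support (moll Φ n)) := by
    refine (integral_pos_iff_support_of_nonneg (moll_nonneg hΦ₀ n)
      (hcont.integrable_of_hasCompactSupport (hasCompactSupport_moll hΦs n))).1 ?_
    rw [integral_moll hΦ hn]
    exact one_pos
  refine (integral_pos_iff_support_of_nonneg
    (fun y => mul_nonneg (hu₀ _).le (moll_nonneg hΦ₀ n y)) ?_).2 ?_
  · exact ((hu.comp (continuous_const.sub continuous_id)).mul hcont).integrable_of_hasCompactSupport
      (hasCompactSupport_moll hΦs n).mul_left
  · rwa [support_mul, support_eq_univ fun y => (hu₀ (x - y)).ne', univ_inter]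

theorem tendsto_convol_moll (hΦ : IsMollifier Φ) (hΦ₀ : ∀ x, 0 ≤ Φ x) (hΦs : support Φ ⊆ ball 0 1)
    {u : ℕ → ℝ → ℝ} (hu : ∀ n, AEStronglyMeasurable (u n)) {x₀ z : ℝ}
    (hlim : Tendsto (fun q : ℕ × ℝ => u q.1 q.2) (atTop ×ˢ 𝓝 x₀) (𝓝 z)) :
    Tendsto (fun q : ℕ × ℝ => convol (u q.1) (moll Φ q.1) q.2) (atTop ×ˢ 𝓝 x₀) (𝓝 z) := by
  simp only [convol_eq_convolution]
  refine convolution_tendsto_right (Eventually.of_forall fun q => moll_nonneg hΦ₀ q.1)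
    ((tendsto_fst.eventually (eventually_ne_atTop 0)).mono fun q hq => integral_moll hΦ hq)
    ((tendsto_support_moll hΦs).comp tendsto_fst) (Eventually.of_forall fun q => hu q.1)
    (hlim.comp ((tendsto_fst.comp tendsto_fst).prodMk tendsto_snd)) tendsto_snd

end Mollification

theorem tendsto_min_natCast {v : ℝ → ℝ} (hv : Continuous v) (x₀ : ℝ) :
    Tendsto (fun q : ℕ × ℝ => min (v q.2) (q.1 : ℝ)) (atTop ×ˢ 𝓝 x₀) (𝓝 (v x₀)) := by
  have hv' : Tendsto (fun q : ℕ × ℝ => v q.2) (atTop ×ˢ 𝓝 x₀) (𝓝 (v x₀)) :=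
    hv.continuousAt.tendsto.comp tendsto_snd
  refine hv'.congr' ?_
  filter_upwards [hv'.eventually (gt_mem_nhds (lt_add_one (v x₀))),
    tendsto_fst.eventually ((tendsto_natCast_atTop_atTop (R := ℝ)).eventually_ge_atTop
      (v x₀ + 1))] with q hlt hge
  exact (min_eq_left (hlt.trans_le hge).le).symm

section Regularization

variable {σ b : ℝ → ℝ} {Φ : SchwartzMap ℝ ℝ}

theorem continuous_sigmaSqReg (hσ : Continuous σ) (hΦs : support Φ ⊆ ball 0 1) (n : ℕ) :
    Continuous (sigmaSqReg σ Φ n) :=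
  (contDiff_convol_moll hΦs ((hσ.pow 2).min continuous_const).locallyIntegrable n).continuous

theorem continuous_deriv_bReg (hb : Continuous b) (hΦs : support Φ ⊆ ball 0 1) (n : ℕ) :
    Continuous (deriv (bReg b Φ n)) :=
  (contDiff_convol_moll hΦs (continuous_const.max (hb.min continuous_const)).locallyIntegrable
    n).continuous_deriv (by simp)

theorem sigmaSqReg_pos (hσ : Continuous σ) (hσ₀ : ∀ x, 0 < σ x) (hΦ : IsMollifier Φ)
    (hΦ₀ : ∀ x, 0 ≤ Φ x) (hΦs : support Φ ⊆ ball 0 1) {n : ℕ} (hn : n ≠ 0) (x : ℝ) :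
    0 < sigmaSqReg σ Φ n x :=
  convol_moll_pos hΦ hΦ₀ hΦs ((hσ.pow 2).min continuous_const)
    (fun y => lt_min (pow_pos (hσ₀ y) 2) (Nat.cast_pos.2 (Nat.pos_of_ne_zero hn))) hn x

theorem tendsto_sigmaSqReg (hσ : Continuous σ) (hΦ : IsMollifier Φ) (hΦ₀ : ∀ x, 0 ≤ Φ x)
    (hΦs : support Φ ⊆ ball 0 1) (x₀ : ℝ) :
    Tendsto (fun q : ℕ × ℝ => sigmaSqReg σ Φ q.1 q.2) (atTop ×ˢ 𝓝 x₀) (𝓝 (σ x₀ ^ 2)) :=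
  tendsto_convol_moll hΦ hΦ₀ hΦs
    (fun _ => ((hσ.pow 2).min continuous_const).aestronglyMeasurable)
    (tendsto_min_natCast (hσ.pow 2) x₀)

theorem hasDerivAt_sigmaApprox (hσ : Continuous σ) (hσ₀ : ∀ x, 0 < σ x) (hb : Continuous b)
    (hΦ : IsMollifier Φ) (hΦ₀ : ∀ x, 0 ≤ Φ x) (hΦs : support Φ ⊆ ball 0 1) {n : ℕ} (hn : n ≠ 0)
    (y : ℝ) :
    HasDerivAt (SigmaApprox σ b Φ n) (2 * (deriv (bReg b Φ n) y / sigmaSqReg σ Φ n y)) y := by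
  have hcont : Continuous fun y => deriv (bReg b Φ n) y / sigmaSqReg σ Φ n y :=
    (continuous_deriv_bReg hb hΦs n).div (continuous_sigmaSqReg hσ hΦs n)
      fun y => (sigmaSqReg_pos hσ hσ₀ hΦ hΦ₀ hΦs hn y).ne'
  exact (hcont.integral_hasStrictDerivAt 0 y).hasDerivAt.const_mul 2

theorem hasDerivAt_exp_sigmaApprox_mul_deriv (hσ : Continuous σ) (hσ₀ : ∀ x, 0 < σ x)
    (hb : Continuous b) (hΦ : IsMollifier Φ) (hΦ₀ : ∀ x, 0 ≤ Φ x) (hΦs : support Φ ⊆ ball 0 1)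
    {n : ℕ} (hn : n ≠ 0) {w : ℝ → ℝ} (hw : ContDiff ℝ 2 w) (y : ℝ) :
    HasDerivAt (fun y => Real.exp (SigmaApprox σ b Φ n y) * deriv w y)
      (Real.exp (SigmaApprox σ b Φ n y) * (2 * Lreg σ b Φ n w y / sigmaSqReg σ Φ n y)) y := by
  have hw' : HasDerivAt (deriv w) (deriv (deriv w) y) y :=
    (((contDiff_succ_iff_deriv (n := 1)).1 hw).2.2.differentiable one_ne_zero y).hasDerivAt
  refine (((hasDerivAt_sigmaApprox hσ hσ₀ hb hΦ hΦ₀ hΦs hn y).exp).mul hw').congr_deriv ?_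
  have := (sigmaSqReg_pos hσ hσ₀ hΦ hΦ₀ hΦs hn y).ne'
  unfold Lreg
  field_simp
  ring

theorem deriv_sub_of_contDiff {f g : ℝ → ℝ} (hf : ContDiff ℝ 1 f) (hg : ContDiff ℝ 1 g) :
    deriv (f - g) = deriv f - deriv g :=
  funext fun x => deriv_sub (hf.differentiable one_ne_zero x) (hg.differentiable one_ne_zero x)

theorem Lreg_sub (n : ℕ) {f g : ℝ → ℝ} (hf : ContDiff ℝ 2 f) (hg : ContDiff ℝ 2 g) :
    Lreg σ b Φ n (f - g) = Lreg σ b Φ n f - Lreg σ b Φ n g := by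
  have hd := deriv_sub_of_contDiff (hf.of_le one_le_two) (hg.of_le one_le_two)
  have hdd : deriv (deriv f - deriv g) = deriv (deriv f) - deriv (deriv g) :=
    deriv_sub_of_contDiff ((contDiff_succ_iff_deriv (n := 1)).1 hf).2.2
      ((contDiff_succ_iff_deriv (n := 1)).1 hg).2.2
  ext x
  simp only [Lreg, hd, hdd, Pi.sub_apply]
  ring

theorem eq_zero_of_tendsto_Lreg {Sg : ℝ → ℝ} (hσ : Continuous σ) (hσ₀ : ∀ x, 0 < σ x)
    (hb : Continuous b) (hΦ : IsMollifier Φ) (hΦ₀ : ∀ x, 0 ≤ Φ x) (hΦs : support Φ ⊆ ball 0 1)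
    (hSg : Continuous Sg) (hSgΦ : TendstoLocallyUniformly (SigmaApprox σ b Φ) Sg atTop)
    {w : ℕ → ℝ → ℝ} {d : ℝ → ℝ} (hw : ∀ n, ContDiff ℝ 2 (w n))
    (hw' : ∀ x, Tendsto (fun n => deriv (w n) x) atTop (𝓝 0))
    (hL : TendstoLocallyUniformly (fun n => Lreg σ b Φ n (w n)) d atTop) (hd : Continuous d) :
    d = 0 := by
  ext x₀
  set g := fun y => Real.exp (Sg y) * (2 * d y / σ y ^ 2)
  have hσ2 : ∀ y, σ y ^ 2 ≠ 0 := fun y => (pow_pos (hσ₀ y) 2).ne'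
  have hg : Continuous g :=
    (Real.continuous_exp.comp hSg).mul ((continuous_const.mul hd).div (hσ.pow 2) hσ2)
  have hlim : Tendsto (fun q : ℕ × ℝ => Real.exp (SigmaApprox σ b Φ q.1 q.2) *
      (2 * Lreg σ b Φ q.1 (w q.1) q.2 / sigmaSqReg σ Φ q.1 q.2)) (atTop ×ˢ 𝓝 x₀) (𝓝 (g x₀)) :=
    (hSgΦ.tendsto_uncurry hSg.continuousAt).rexp.mul
      (((hL.tendsto_uncurry hd.continuousAt).const_mul 2).div
        (tendsto_sigmaSqReg hσ hΦ hΦ₀ hΦs x₀) (hσ2 x₀))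
  have hderiv : HasDerivAt (fun _ => (0 : ℝ)) (g x₀) x₀ := by
    refine hasDerivAt_of_tendstoUniformlyOnFilter
      (f := fun n y => Real.exp (SigmaApprox σ b Φ n y) * deriv (w n) y)
      (f' := fun n y => Real.exp (SigmaApprox σ b Φ n y) *
        (2 * Lreg σ b Φ n (w n) y / sigmaSqReg σ Φ n y))
      (tendstoUniformlyOnFilter_nhds_of_tendsto_uncurry hlim hg.continuousAt)
      ((tendsto_fst.eventually (eventually_ne_atTop 0)).mono fun q hq =>
        hasDerivAt_exp_sigmaApprox_mul_deriv hσ hσ₀ hb hΦ hΦ₀ hΦs hq (hw q.1) q.2)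
      (Eventually.of_forall fun y => ?_)
    simpa using (hSgΦ.tendsto_comp hSg.continuousAt tendsto_const_nhds).rexp.mul (hw' y)
  have hg₀ : g x₀ = 0 := hderiv.unique (hasDerivAt_const x₀ 0)
  simpa [g, Real.exp_ne_zero, hσ2] using hg₀

end Regularization

theorem statement5_general (σ b Sg : ℝ → ℝ) (hσc : Continuous σ) (hσpos : ∀ x, 0 < σ x)
    (hbc : Continuous b) (hSg : SigmaExists σ b Sg)
    (f ℓ₁ ℓ₂ : ℝ → ℝ)
    (h₁ : IsC1GenSolution σ b f ℓ₁) (h₂ : IsC1GenSolution σ b f ℓ₂) :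
    ℓ₁ = ℓ₂ := by
  obtain ⟨Φ, hΦ, hΦ₀, hΦs⟩ := exists_nonneg_mollifier_support_subset_ball
  obtain ⟨-, hℓ₁, H₁⟩ := h₁
  obtain ⟨-, hℓ₂, H₂⟩ := h₂
  obtain ⟨fn, hfn, -, -, hfn', hLf⟩ := H₁ Φ hΦ
  obtain ⟨gn, hgn, -, -, hgn', hLg⟩ := H₂ Φ hΦ
  have hw' : ∀ x, Tendsto (fun n => deriv (fn n - gn n) x) atTop (𝓝 0) := fun x => by
    have h := hfn'.sub hgn'
    rw [sub_self] at h
    simpa [deriv_sub_of_contDiff ((hfn _).of_le one_le_two) ((hgn _).of_le one_le_two)] using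
      h.tendsto_comp continuousAt_const tendsto_const_nhds
  have hL : TendstoLocallyUniformly (fun n => Lreg σ b Φ n (fn n - gn n)) (ℓ₁ - ℓ₂) atTop := by
    refine (hLf.sub hLg).congr fun n x => ?_
    rw [Lreg_sub n (hfn n) (hgn n)]
    rfl
  exact sub_eq_zero.1 (eq_zero_of_tendsto_Lreg hσc hσpos hbc hΦ hΦ₀ hΦs hSg.1 (hSg.2 Φ hΦ)
    (fun n => (hfn n).sub (hgn n)) hw' hL (hℓ₁.sub hℓ₂))

/-- Remark 2.9: for a fixed `f ∈ C¹(ℝ)` there is at most one `ℓ̇ ∈ C⁰(ℝ)`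
such that `Lf = ℓ̇` in the `C¹`-generalized sense. -/
theorem statement5 (σ b Sg : ℝ → ℝ) (hσc : Continuous σ) (hσpos : ∀ x, 0 < σ x)
    (hbc : Continuous b) (hb0 : b 0 = 0) (hSg : SigmaExists σ b Sg)
    (f ℓ₁ ℓ₂ : ℝ → ℝ)
    (h₁ : IsC1GenSolution σ b f ℓ₁) (h₂ : IsC1GenSolution σ b f ℓ₂) :
    ℓ₁ = ℓ₂ :=
  statement5_general σ b Sg hσc hσpos hbc hSg f ℓ₁ ℓ₂ h₁ h₂

end
end

section
/- Let σ : ℝ → ℝ be continuous with σ > 0, let β : ℝ → ℝ be continuous, locally of bounded variation, with β(0) = 0, and set Σ(x) := log(σ²(x)/σ²(0)) + 2∫_0^x (1/σ²(y)) dβ(y) (Lebesgue–Stieltjes integral). Then for every x ∈ ℝ, (σ²(x)/2) e^{−Σ(x)} − σ²(0)/2 + ∫_0^x e^{−Σ(y)} dβ(y) = 0. Equivalently, with h defined by h(0) = 0 and h'(x) = e^{−Σ(x)}, the extension of the operator L̂f(x) = (σ²(x)/2) f'(x) − (σ²(0)/2) f'(0) + ∫_0^x f' dβ to f ∈ C¹(ℝ)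 satisfies L̂h = 0. -/
/-! The identity is the chain rule `d(φ ∘ A) = φ'(A) dA` for `A := ∫₀ σ⁻² dβ`, which is continuous
and of locally bounded variation, applied to `φ(s) = -e^{-2s}/2`; indeed `Σ = log(σ²/σ²(0)) + 2A`
gives `e^{-Σ} = σ²(0) σ⁻² e^{-2A}`.

The chain rule holds because `F z := φ(A z) - ∫ₐᶻ φ'(A) dA` has zero derivative with respect to
the variation `B z := ∫ₐᶻ |dA|`: near each point `y`, the linearization of `φ` at `A y` and the
continuity of `φ' ∘ A` give `|F z - F y| ≤ ε (B z - B y)`, and a continuous induction turns this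
local bound into `|F b - F a| ≤ ε (B b - B a)` for every `ε > 0`. -/

open MeasureTheory Filter Topology Set

noncomputable section

/-- The Stieltjes integral `∫₀ˣ g dμ` of `g` against a (nonnegative) measure `μ`, with the
orientation convention `∫₀ˣ = −∫ₓ⁰` for `x < 0`. -/
def stInt (g : ℝ → ℝ) (μ : MeasureTheory.Measure ℝ) (x : ℝ) : ℝ :=
  if 0 ≤ x then ∫ y in Set.Ioc (0:ℝ) x, g y ∂μ else -∫ y in Set.Ioc x (0:ℝ), g y ∂μ

theorem stInt_eq_intervalIntegral (g : ℝ → ℝ) (μ : Measure ℝ) (x : ℝ) :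
    stInt g μ x = ∫ y in 0..x, g y ∂μ := by
  unfold stInt
  split_ifs with hx
  · rw [intervalIntegral.integral_of_le hx]
  · rw [intervalIntegral.integral_of_ge (le_of_not_ge hx)]

theorem StieltjesFunction.nullSingletonClass_of_continuous (f : StieltjesFunction ℝ)
    (hf : Continuous f) : NullSingletonClass f.measure :=
  ⟨fun t => by rw [f.measure_singleton, hf.continuousWithinAt.leftLim_eq, sub_self,
    ENNReal.ofReal_zero]⟩

theorem MeasureTheory.LocallyIntegrable.intervalIntegrable {E : Type*} [NormedAddCommGroup E]
    {f : ℝ → E} {μ : Measure ℝ} (hf : LocallyIntegrable f μ) (a b : ℝ) :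
    IntervalIntegrable f μ a b :=
  (hf.integrableOn_isCompact isCompact_uIcc).intervalIntegrable

theorem abs_sub_le_mul_sub_of_eventually_nhdsGT {F B : ℝ → ℝ} (hF : Continuous F)
    (hB : Continuous B) {ε : ℝ} (h : ∀ y, ∀ᶠ z in 𝓝[>] y, |F z - F y| ≤ ε * (B z - B y))
    {a b : ℝ} (hab : a ≤ b) : |F b - F a| ≤ ε * (B b - B a) := by
  let s := {y | |F y - F a| ≤ ε * (B y - B a)}
  have hs : IsClosed s := isClosed_le (by fun_prop) (by fun_prop)
  have ha : a ∈ s := by simp [s]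
  refine (hs.inter isClosed_Icc).Icc_subset_of_forall_mem_nhdsWithin ha ?_ ⟨hab, le_rfl⟩
  intro y hy
  filter_upwards [h y] with z hz
  calc |F z - F a| ≤ |F z - F y| + |F y - F a| := abs_sub_le _ _ _
    _ ≤ ε * (B z - B y) + ε * (B y - B a) := add_le_add hz hy.1
    _ = ε * (B z - B a) := by ring

theorem eq_of_forall_pos_eventually_nhdsGT_abs_sub_le {F B : ℝ → ℝ} (hF : Continuous F)
    (hB : Continuous B)
    (h : ∀ ε > 0, ∀ y, ∀ᶠ z in 𝓝[>] y, |F z - F y| ≤ ε * (B z - B y)) (a b : ℝ) :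
    F a = F b := by
  wlog hab : a ≤ b generalizing a b
  · exact (this b a (le_of_not_ge hab)).symm
  have hlim : Tendsto (fun ε => ε * (B b - B a)) (𝓝[>] 0) (𝓝 0) := by
    simpa using (tendsto_nhdsWithin_of_tendsto_nhds
      ((continuous_id.mul continuous_const).tendsto (0 : ℝ)) :
        Tendsto (fun ε : ℝ => ε * (B b - B a)) (𝓝[>] 0) _)
  have hle : |F b - F a| ≤ 0 := ge_of_tendsto hlim <| eventually_nhdsWithin_of_forall
    fun ε hε => abs_sub_le_mul_sub_of_eventually_nhdsGT hF hB (h ε hε) hab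
  linarith [abs_nonneg (F b - F a), abs_le.mp hle]

theorem abs_intervalIntegral_mul_sub_le {μ : Measure ℝ} {f g : ℝ → ℝ} {c ε y z : ℝ}
    (hyz : y ≤ z) (hg : IntervalIntegrable g μ y z) (hf : ContinuousOn f (uIcc y z))
    (hfc : ∀ x ∈ Ioc y z, |f x - c| ≤ ε) :
    |(∫ x in y..z, f x * g x ∂μ) - c * ∫ x in y..z, g x ∂μ| ≤ ε * ∫ x in y..z, |g x| ∂μ := by
  rw [← intervalIntegral.integral_const_mul c, ← intervalIntegral.integral_const_mul ε,
    ← intervalIntegral.integral_sub (hg.continuousOn_mul hf) (hg.const_mul c), ← Real.norm_eq_abs]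
  refine intervalIntegral.norm_integral_le_of_norm_le hyz (ae_of_all _ fun x hx => ?_)
    (hg.abs.const_mul ε)
  rw [Real.norm_eq_abs, ← sub_mul, abs_mul]
  exact mul_le_mul_of_nonneg_right (hfc x hx) (abs_nonneg _)

theorem intervalIntegral_sub_sub_intervalIntegral_sub {μ₁ μ₂ : Measure ℝ} {f : ℝ → ℝ}
    (h₁ : ∀ y z, IntervalIntegrable f μ₁ y z) (h₂ : ∀ y z, IntervalIntegrable f μ₂ y z)
    (a y z : ℝ) :
    ((∫ x in a..z, f x ∂μ₁) - ∫ x in a..z, f x ∂μ₂)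
        - ((∫ x in a..y, f x ∂μ₁) - ∫ x in a..y, f x ∂μ₂)
      = (∫ x in y..z, f x ∂μ₁) - ∫ x in y..z, f x ∂μ₂ := by
  rw [← intervalIntegral.integral_interval_sub_left (h₁ a z) (h₁ a y),
    ← intervalIntegral.integral_interval_sub_left (h₂ a z) (h₂ a y)]
  ring

section ChainRule

variable {μ₁ μ₂ : Measure ℝ} [NullSingletonClass μ₁] [NullSingletonClass μ₂] {g A φ φ' : ℝ → ℝ}

theorem continuous_of_sub_eq_intervalIntegral_sub (hg₁ : LocallyIntegrable g μ₁)
    (hg₂ : LocallyIntegrable g μ₂)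
    (hA : ∀ y z, A z - A y = (∫ x in y..z, g x ∂μ₁) - ∫ x in y..z, g x ∂μ₂) : Continuous A := by
  have : A = fun z => A 0 + ((∫ x in 0..z, g x ∂μ₁) - ∫ x in 0..z, g x ∂μ₂) := by
    ext z; rw [← hA 0 z]; ring
  rw [this]
  exact continuous_const.add ((intervalIntegral.continuous_primitive hg₁.intervalIntegrable 0).sub
    (intervalIntegral.continuous_primitive hg₂.intervalIntegrable 0))

theorem eventually_nhdsGT_abs_sub_sub_intervalIntegral_le (hg₁ : LocallyIntegrable g μ₁)
    (hg₂ : LocallyIntegrable g μ₂)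
    (hA : ∀ y z, A z - A y = (∫ x in y..z, g x ∂μ₁) - ∫ x in y..z, g x ∂μ₂)
    (hφ : ∀ t, HasDerivAt φ (φ' t) t) (hφ' : Continuous φ') (y : ℝ) {ε : ℝ} (hε : 0 < ε) :
    ∀ᶠ z in 𝓝[>] y, |φ (A z) - φ (A y)
        - ((∫ x in y..z, φ' (A x) * g x ∂μ₁) - ∫ x in y..z, φ' (A x) * g x ∂μ₂)|
      ≤ 2 * ε * ((∫ x in y..z, |g x| ∂μ₁) + ∫ x in y..z, |g x| ∂μ₂) := by
  have hAc := continuous_of_sub_eq_intervalIntegral_sub hg₁ hg₂ hA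
  set c := φ' (A y)
  have h_lin : ∀ᶠ z in 𝓝 y, |φ (A z) - φ (A y) - c * (A z - A y)| ≤ ε * |A z - A y| := by
    filter_upwards [hAc.continuousAt.tendsto.eventually ((hφ (A y)).isLittleO.bound hε)]
      with z hz
    simpa [Real.norm_eq_abs, smul_eq_mul, mul_comm] using hz
  have h_near : ∀ᶠ z in 𝓝[>] y, ∀ x ∈ Ioc y z, |φ' (A x) - c| ≤ ε := by
    obtain ⟨δ, hδ, hball⟩ := Metric.continuousAt_iff.mp ((hφ'.comp hAc).continuousAt (x := y)) ε hε
    filter_upwards [Ioo_mem_nhdsGT (show y < y + δ by linarith)] with z hz x hx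
    have := @hball x (by rw [Real.dist_eq, abs_lt]; constructor <;> linarith [hx.1, hx.2, hz.2])
    exact (Real.dist_eq _ _ ▸ this).le
  filter_upwards [nhdsWithin_le_nhds h_lin, h_near, self_mem_nhdsWithin]
    with z hlin hnear (hyz : y < z)
  have hAz : |A z - A y| ≤ (∫ x in y..z, |g x| ∂μ₁) + ∫ x in y..z, |g x| ∂μ₂ := by
    rw [hA y z]
    exact (abs_sub _ _).trans (add_le_add
      (intervalIntegral.abs_integral_le_integral_abs hyz.le)
      (intervalIntegral.abs_integral_le_integral_abs hyz.le))
  have hφ'A : ContinuousOn (fun x => φ' (A x)) (uIcc y z) := (hφ'.comp hAc).continuousOn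
  have h₁ := abs_intervalIntegral_mul_sub_le hyz.le (hg₁.intervalIntegrable y z) hφ'A hnear
  have h₂ := abs_intervalIntegral_mul_sub_le hyz.le (hg₂.intervalIntegrable y z) hφ'A hnear
  have hsplit : φ (A z) - φ (A y)
        - ((∫ x in y..z, φ' (A x) * g x ∂μ₁) - ∫ x in y..z, φ' (A x) * g x ∂μ₂)
      = (φ (A z) - φ (A y) - c * (A z - A y))
        - (((∫ x in y..z, φ' (A x) * g x ∂μ₁) - c * ∫ x in y..z, g x ∂μ₁)
          - ((∫ x in y..z, φ' (A x) * g x ∂μ₂) - c * ∫ x in y..z, g x ∂μ₂)) := by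
    rw [hA y z]; ring
  rw [hsplit, abs_le]
  have := abs_le.mp (hlin.trans (mul_le_mul_of_nonneg_left hAz hε.le))
  constructor <;> linarith [abs_le.mp h₁, abs_le.mp h₂]

theorem sub_intervalIntegral_comp_mul_eq (hg₁ : LocallyIntegrable g μ₁)
    (hg₂ : LocallyIntegrable g μ₂)
    (hA : ∀ y z, A z - A y = (∫ x in y..z, g x ∂μ₁) - ∫ x in y..z, g x ∂μ₂)
    (hφ : ∀ t, HasDerivAt φ (φ' t) t) (hφ' : Continuous φ') (a b : ℝ) :
    (∫ x in a..b, φ' (A x) * g x ∂μ₁) - ∫ x in a..b, φ' (A x) * g x ∂μ₂ = φ (A b) - φ (A a) := by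
  have hAc := continuous_of_sub_eq_intervalIntegral_sub hg₁ hg₂ hA
  have hint : ∀ μ, LocallyIntegrable g μ → ∀ y z,
      IntervalIntegrable (fun x => φ' (A x) * g x) μ y z := fun μ hg y z =>
    (hg.intervalIntegrable y z).continuousOn_mul (hφ'.comp hAc).continuousOn
  set F := fun z => φ (A z)
    - ((∫ x in a..z, φ' (A x) * g x ∂μ₁) - ∫ x in a..z, φ' (A x) * g x ∂μ₂)
  set B := fun z => (∫ x in a..z, |g x| ∂μ₁) + ∫ x in a..z, |g x| ∂μ₂
  have hF : Continuous F :=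
    ((continuous_iff_continuousAt.2 fun t => (hφ t).continuousAt).comp hAc).sub
      ((intervalIntegral.continuous_primitive (hint μ₁ hg₁) a).sub
        (intervalIntegral.continuous_primitive (hint μ₂ hg₂) a))
  have hB : Continuous B :=
    (intervalIntegral.continuous_primitive (fun y z => (hg₁.intervalIntegrable y z).abs) a).add
      (intervalIntegral.continuous_primitive (fun y z => (hg₂.intervalIntegrable y z).abs) a)
  have hloc : ∀ ε > 0, ∀ y, ∀ᶠ z in 𝓝[>] y, |F z - F y| ≤ ε * (B z - B y) := by
    intro ε hε y
    filter_upwards [eventually_nhdsGT_abs_sub_sub_intervalIntegral_le hg₁ hg₂ hA hφ hφ' y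
      (half_pos hε)] with z hz
    have hFzy : F z - F y = φ (A z) - φ (A y)
        - ((∫ x in y..z, φ' (A x) * g x ∂μ₁) - ∫ x in y..z, φ' (A x) * g x ∂μ₂) := by
      rw [← intervalIntegral_sub_sub_intervalIntegral_sub (hint μ₁ hg₁) (hint μ₂ hg₂) a y z]
      ring
    have hBzy : B z - B y = (∫ x in y..z, |g x| ∂μ₁) + ∫ x in y..z, |g x| ∂μ₂ := by
      simp only [B]
      rw [← intervalIntegral.integral_interval_sub_left (hg₁.intervalIntegrable a z).abs
          (hg₁.intervalIntegrable a y).abs,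
        ← intervalIntegral.integral_interval_sub_left (hg₂.intervalIntegrable a z).abs
          (hg₂.intervalIntegrable a y).abs]
      ring
    rw [hFzy, hBzy]
    linarith
  have := eq_of_forall_pos_eventually_nhdsGT_abs_sub_le hF hB hloc a b
  simp only [F, intervalIntegral.integral_same, sub_zero] at this
  linarith

end ChainRule

theorem statement19_general (σ : ℝ → ℝ) (hσc : Continuous σ) (hσpos : ∀ x, 0 < σ x)
    (β₁ β₂ : StieltjesFunction ℝ) (hβ₁ : Continuous fun x => β₁ x)
    (hβ₂ : Continuous fun x => β₂ x)
    (Sg : ℝ → ℝ)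
    (hSgdef : ∀ x, Sg x = Real.log (σ x ^ 2 / σ 0 ^ 2)
      + 2 * (stInt (fun y => (σ y ^ 2)⁻¹) β₁.measure x
              - stInt (fun y => (σ y ^ 2)⁻¹) β₂.measure x)) :
    ∀ x, σ x ^ 2 / 2 * Real.exp (-Sg x) - σ 0 ^ 2 / 2
      + (stInt (fun y => Real.exp (-Sg y)) β₁.measure x
          - stInt (fun y => Real.exp (-Sg y)) β₂.measure x) = 0 := by
  intro x
  have := β₁.nullSingletonClass_of_continuous hβ₁
  have := β₂.nullSingletonClass_of_continuous hβ₂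
  set g : ℝ → ℝ := fun y => (σ y ^ 2)⁻¹
  have hσ2 : ∀ y, σ y ^ 2 ≠ 0 := fun y => (pow_pos (hσpos y) 2).ne'
  have hg : Continuous g := (hσc.pow 2).inv₀ hσ2
  set A : ℝ → ℝ := fun y => (∫ t in 0..y, g t ∂β₁.measure) - ∫ t in 0..y, g t ∂β₂.measure
  have hA : ∀ y z, A z - A y = (∫ t in y..z, g t ∂β₁.measure) - ∫ t in y..z, g t ∂β₂.measure :=
    intervalIntegral_sub_sub_intervalIntegral_sub hg.intervalIntegrable hg.intervalIntegrable 0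
  have hexp : ∀ y, Real.exp (-Sg y) = σ 0 ^ 2 * (Real.exp (-2 * A y) * g y) := by
    intro y
    rw [hSgdef y, stInt_eq_intervalIntegral, stInt_eq_intervalIntegral, neg_add, Real.exp_add,
      Real.exp_neg, Real.exp_log (div_pos (pow_pos (hσpos y) 2) (pow_pos (hσpos 0) 2))]
    simp only [A, g]
    field_simp
  have hφ : ∀ t, HasDerivAt (fun s => -Real.exp (-2 * s) / 2) (Real.exp (-2 * t)) t := fun t => by
    simpa using (((hasDerivAt_id t).const_mul (-2)).exp.neg.div_const 2)
  have hchain := sub_intervalIntegral_comp_mul_eq hg.locallyIntegrable hg.locallyIntegrable hA hφ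
    (by fun_prop) 0 x
  simp only [stInt_eq_intervalIntegral, hexp, intervalIntegral.integral_const_mul]
  have hA0 : A 0 = 0 := by simp [A]
  rw [← mul_sub, hchain, hA0, mul_zero, Real.exp_zero]
  have hσx : σ x ≠ 0 := (hσpos x).ne'
  simp only [g]
  field_simp
  ring

/-- Example 4(ii), `L̂h = 0`: with `β` continuous and locally of bounded
variation (written as `β = β₁ − β₂` with `β₁, β₂` continuous Stieltjes functions),
`β(0) = 0`, and `Σ(x) = log(σ²(x)/σ²(0)) + 2∫₀ˣ σ⁻² dβ`, one has for every `x`: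
`(σ²(x)/2) e^{−Σ(x)} − σ²(0)/2 + ∫₀ˣ e^{−Σ} dβ = 0`. -/
theorem statement19 (σ : ℝ → ℝ) (hσc : Continuous σ) (hσpos : ∀ x, 0 < σ x)
    (β₁ β₂ : StieltjesFunction ℝ) (hβ₁ : Continuous fun x => β₁ x)
    (hβ₂ : Continuous fun x => β₂ x)
    (β : ℝ → ℝ) (hβ : ∀ x, β x = β₁ x - β₂ x) (hβ0 : β 0 = 0)
    (Sg : ℝ → ℝ)
    (hSgdef : ∀ x, Sg x = Real.log (σ x ^ 2 / σ 0 ^ 2)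
      + 2 * (stInt (fun y => (σ y ^ 2)⁻¹) β₁.measure x
              - stInt (fun y => (σ y ^ 2)⁻¹) β₂.measure x)) :
    ∀ x, σ x ^ 2 / 2 * Real.exp (-Sg x) - σ 0 ^ 2 / 2
      + (stInt (fun y => Real.exp (-Sg y)) β₁.measure x
          - stInt (fun y => Real.exp (-Sg y)) β₂.measure x) = 0 :=
  statement19_general σ hσc hσpos β₁ β₂ hβ₁ hβ₂ Sg hSgdef
end
end
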